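/- arXiv:2304.13246 — 2 statements merged into one kernel-verified Lean document; each statement's English description precedes it below -/
import Mathlib

section
/- For the game with strategy sets X_i = [0, C_i] (with C_i > 0) and cost functions J_i(x) = Q_i x_i² + h_i x_i - (P̄ - γ Σ_j x_j) x_i with Q_i > 0 and γ > 0, there exists a unique Nash equilibrium x* ∈ X = ∏_i [0, C_i]. -/
/-- the game with strategy sets `[0, C_i]` (`C_i > 0`) and costs
`J_i(x) = Q_i x_i² + h_i x_i - (P̄ - γ ∑_j x_j) x_i` (`Q_i > 0`, `γ > 0`) has a
unique Nash equilibrium. -/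
theorem exists_unique_nash_equilibrium
    (N : ℕ) (Q h C : Fin N → ℝ) (P γ : ℝ)
    (hQ : ∀ i, 0 < Q i) (hγ : 0 < γ) (hC : ∀ i, 0 < C i)
    (J : Fin N → (Fin N → ℝ) → ℝ)
    (hJ : ∀ i x, J i x =
      Q i * (x i) ^ 2 + h i * x i - (P - γ * ∑ j, x j) * x i) :
    ∃! xstar : Fin N → ℝ,
      (∀ i, xstar i ∈ Set.Icc 0 (C i)) ∧
      ∀ i, ∀ t ∈ Set.Icc 0 (C i), J i xstar ≤ J i (Function.update xstar i t) := by
  classical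
  -- the exact potential function of the game
  set Φ : (Fin N → ℝ) → ℝ := fun x =>
    (∑ j, (Q j * (x j) ^ 2 + (h j - P) * x j + γ / 2 * (x j) ^ 2))
      + γ / 2 * (∑ j, x j) ^ 2 with hΦdef
  -- sum over an updated function
  have hsum : ∀ (f : Fin N → ℝ → ℝ) (x : Fin N → ℝ) (i : Fin N) (t : ℝ),
      ∑ j, f j (Function.update x i t j) = ∑ j, f j (x j) - f i (x i) + f i t := by
    intro f x i t
    have h1 : ∀ j, f j (Function.update x i t j)
        = Function.update (fun j => f j (x j)) i (f i t) j := by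
      intro j
      by_cases hj : j = i
      · subst hj; simp
      · simp [Function.update_of_ne hj]
    rw [Finset.sum_congr rfl fun j _ => h1 j,
      Finset.sum_update_of_mem (Finset.mem_univ i),
      Finset.sum_eq_sum_sdiff_singleton_add (Finset.mem_univ i) (fun j => f j (x j))]
    ring
  have hsum' : ∀ (x : Fin N → ℝ) (i : Fin N) (t : ℝ),
      ∑ j, Function.update x i t j = (∑ j, x j) - x i + t :=
    fun x i t => hsum (fun _ u => u) x i t
  -- the potential property: changing coordinate i changes J i and Φ by the same amount
  have hdiff : ∀ (x : Fin N → ℝ) (i : Fin N) (t : ℝ),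
      J i (Function.update x i t) - J i x = Φ (Function.update x i t) - Φ x := by
    intro x i t
    rw [hJ, hJ, hΦdef]
    simp only
    rw [hsum (fun j u => Q j * u ^ 2 + (h j - P) * u + γ / 2 * u ^ 2) x i t,
      hsum' x i t, Function.update_self]
    set S := ∑ j, x j
    set A := ∑ j, (Q j * x j ^ 2 + (h j - P) * x j + γ / 2 * x j ^ 2)
    ring
  -- the "pseudo-gradient" of the game
  set F : (Fin N → ℝ) → Fin N → ℝ := fun x i =>
    (2 * Q i + γ) * x i + γ * (∑ j, x j) + h i - P with hFdef
  -- quadratic expansion of the cost along one coordinate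
  have hquad : ∀ (x : Fin N → ℝ) (i : Fin N) (t : ℝ),
      J i (Function.update x i t) - J i x
        = (Q i + γ) * (t - x i) ^ 2 + F x i * (t - x i) := by
    intro x i t
    rw [hJ, hJ, hFdef]
    simp only
    rw [hsum' x i t, Function.update_self]
    ring
  -- from the Nash property, the variational inequality (KKT)
  have hVI : ∀ (x : Fin N → ℝ), (∀ i, x i ∈ Set.Icc 0 (C i)) →
      (∀ i, ∀ t ∈ Set.Icc 0 (C i), J i x ≤ J i (Function.update x i t)) →
      ∀ i, ∀ t ∈ Set.Icc 0 (C i), 0 ≤ F x i * (t - x i) := by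
    intro x hx hN i t ht
    by_contra hlt
    push_neg at hlt
    obtain ⟨hx0, hx1⟩ := hx i
    obtain ⟨ht0, ht1⟩ := ht
    have ha : 0 < Q i + γ := by have := hQ i; linarith
    have hdne : t - x i ≠ 0 := by
      intro h0
      rw [h0, mul_zero] at hlt
      exact absurd hlt (lt_irrefl 0)
    have hd2 : 0 < (t - x i) ^ 2 := by positivity
    obtain ⟨l, hl0, hl1, hlb⟩ :
        ∃ l : ℝ, 0 < l ∧ l ≤ 1 ∧
          l * (2 * (Q i + γ) * (t - x i) ^ 2) ≤ -(F x i * (t - x i)) := by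
      refine ⟨min 1 (-(F x i * (t - x i)) / (2 * (Q i + γ) * (t - x i) ^ 2)), ?_,
        min_le_left _ _, ?_⟩
      · exact lt_min one_pos (div_pos (by linarith) (by positivity))
      · exact (le_div_iff₀ (by positivity)).mp (min_le_right _ _)
    have hu : x i + l * (t - x i) ∈ Set.Icc 0 (C i) := by
      constructor
      · nlinarith [mul_nonneg hl0.le (sub_nonneg.mpr ht0)]
      · nlinarith [mul_nonneg hl0.le (sub_nonneg.mpr ht1)]
    have hN' := hN i _ hu
    have hq := hquad x i (x i + l * (t - x i))
    have h0 : 0 ≤ (Q i + γ) * (l * (t - x i)) ^ 2 + F x i * (l * (t - x i)) := by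
      have e : x i + l * (t - x i) - x i = l * (t - x i) := by ring
      rw [e] at hq
      linarith
    nlinarith [h0, hlb, hlt, mul_le_mul_of_nonneg_left hlb hl0.le,
      mul_neg_of_pos_of_neg hl0 hlt]
  -- uniqueness: two Nash equilibria coincide (monotonicity argument)
  have huniq : ∀ (x y : Fin N → ℝ),
      (∀ i, x i ∈ Set.Icc 0 (C i)) →
      (∀ i, ∀ t ∈ Set.Icc 0 (C i), J i x ≤ J i (Function.update x i t)) →
      (∀ i, y i ∈ Set.Icc 0 (C i)) →
      (∀ i, ∀ t ∈ Set.Icc 0 (C i), J i y ≤ J i (Function.update y i t)) →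
      x = y := by
    intro x y hxK hxN hyK hyN
    have h1 : 0 ≤ ∑ i, F x i * (y i - x i) :=
      Finset.sum_nonneg fun i _ => hVI x hxK hxN i (y i) (hyK i)
    have h2 : 0 ≤ ∑ i, F y i * (x i - y i) :=
      Finset.sum_nonneg fun i _ => hVI y hyK hyN i (x i) (hxK i)
    set D : ℝ := (∑ j, x j) - (∑ j, y j) with hD
    have hid : ∀ i, F x i * (y i - x i) + F y i * (x i - y i)
        = -((2 * Q i + γ) * (x i - y i) ^ 2) - γ * D * (x i - y i) := by
      intro i; rw [hFdef, hD]; ring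
    have hDsum : ∑ i, (x i - y i) = D := by
      rw [hD, Finset.sum_sub_distrib]
    have hsum3 : ∑ i, (F x i * (y i - x i) + F y i * (x i - y i))
        = -(∑ i, (2 * Q i + γ) * (x i - y i) ^ 2) - γ * D ^ 2 := by
      calc ∑ i, (F x i * (y i - x i) + F y i * (x i - y i))
          = ∑ i, (-((2 * Q i + γ) * (x i - y i) ^ 2) - γ * D * (x i - y i)) :=
            Finset.sum_congr rfl fun i _ => hid i
        _ = -(∑ i, (2 * Q i + γ) * (x i - y i) ^ 2) - γ * D ^ 2 := by
            rw [Finset.sum_sub_distrib, Finset.sum_neg_distrib, ← Finset.mul_sum, hDsum]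
            ring
    have h3 : (∑ i, (2 * Q i + γ) * (x i - y i) ^ 2) + γ * D ^ 2 ≤ 0 := by
      have := Finset.sum_add_distrib (s := Finset.univ)
        (f := fun i => F x i * (y i - x i)) (g := fun i => F y i * (x i - y i))
      rw [hsum3] at this
      linarith
    have h4 : 0 ≤ ∑ i, (2 * Q i + γ) * (x i - y i) ^ 2 :=
      Finset.sum_nonneg fun i _ => by have := hQ i; positivity
    have h5 : ∑ i, (2 * Q i + γ) * (x i - y i) ^ 2 = 0 := by
      nlinarith [sq_nonneg D]
    funext i
    have h6 := (Finset.sum_eq_zero_iff_of_nonneg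
      (fun i _ => by have := hQ i; positivity)).mp h5 i (Finset.mem_univ i)
    have hqi := hQ i
    have h7 : (x i - y i) ^ 2 = 0 := by
      rcases mul_eq_zero.mp h6 with h8 | h8
      · nlinarith
      · exact h8
    have h8 := sq_eq_zero_iff.mp h7
    linarith
  -- existence: minimize the potential on the compact box
  set K : Set (Fin N → ℝ) := Set.univ.pi fun i => Set.Icc 0 (C i) with hK
  have hKmem : ∀ x, x ∈ K ↔ ∀ i, x i ∈ Set.Icc 0 (C i) := by
    intro x; rw [hK, Set.mem_univ_pi]
  have hKc : IsCompact K := isCompact_univ_pi fun i => isCompact_Icc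
  have hKne : K.Nonempty := ⟨fun _ => 0, (hKmem _).mpr fun i => ⟨le_refl 0, (hC i).le⟩⟩
  have hΦc : Continuous Φ := by
    rw [hΦdef]
    fun_prop
  obtain ⟨xstar, hxK, hmin⟩ := hKc.exists_isMinOn hKne hΦc.continuousOn
  have hxmem : ∀ i, xstar i ∈ Set.Icc 0 (C i) := (hKmem _).mp hxK
  have hxNash : ∀ i, ∀ t ∈ Set.Icc 0 (C i),
      J i xstar ≤ J i (Function.update xstar i t) := by
    intro i t ht
    have hupd : Function.update xstar i t ∈ K := by
      rw [hKmem]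
      intro j
      by_cases hj : j = i
      · subst hj; simpa using ht
      · simpa [Function.update_of_ne hj] using hxmem j
    have := hmin hupd
    have hd := hdiff xstar i t
    simp only [Set.mem_setOf_eq] at this
    linarith [this, hd]
  refine ⟨xstar, ⟨hxmem, hxNash⟩, ?_⟩
  intro y ⟨hymem, hyNash⟩
  exact huniq y xstar hymem hyNash hxmem hxNash
end

section
/- If c ∈ (0, 1), L > 0, μ̃ > 0 with μ̃ ≤ L, then there exists α₀ > 0 such that for all α ∈ (0, α₀), the largest eigenvalue of the 2×2 symmetric matrix Q_α = [[1 - 2μ̃α + L²α², 2cLα], [2cLα, (1 + 2Lα + L²α²)c²]] is strictly less than 1. -/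
/-!
1 - Q_α is the 2×2 matrix with diagonal α(2μ̃ - L²α), 1 - c²(1 + Lα)² and determinant
α f(α), where f is a polynomial with f(0) = 2μ̃(1 - c²) > 0. For small α > 0 it is therefore
positive definite by Sylvester's criterion, and every eigenvalue of Q_α is below 1.
-/

open Matrix Filter Topology
open scoped ComplexOrder

theorem Matrix.IsHermitian.eigenvalues_lt_of_posDef_sub {𝕜 n : Type*} [RCLike 𝕜] [Fintype n]
    [DecidableEq n] {Q : Matrix n n 𝕜} (hQ : Q.IsHermitian) {t : ℝ}
    (h : (algebraMap ℝ (Matrix n n 𝕜) t - Q).PosDef) (i : n) : hQ.eigenvalues i < t := by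
  have hmem : t - hQ.eigenvalues i ∈ spectrum ℝ (algebraMap ℝ (Matrix n n 𝕜) t - Q) := by
    rw [← spectrum.singleton_sub_eq]
    exact Set.sub_mem_sub rfl (hQ.eigenvalues_mem_spectrum_real i)
  rw [h.isHermitian.spectrum_real_eq_range_eigenvalues] at hmem
  obtain ⟨j, hj⟩ := hmem
  linarith [h.eigenvalues_pos j]

theorem Matrix.posDef_fin_two {a b d : ℝ} (ha : 0 < a) (hdet : b ^ 2 < a * d) :
    (!![a, b; b, d]).PosDef := by
  refine .of_dotProduct_mulVec_pos ?_ fun x hx => ?_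
  · ext i j
    fin_cases i <;> fin_cases j <;> rfl
  have hx' : x 0 ≠ 0 ∨ x 1 ≠ 0 := by
    by_contra! h0
    exact hx (funext fun j => by fin_cases j <;> simp [h0.1, h0.2])
  simp only [star_trivial, dotProduct, mulVec, Fin.sum_univ_two, of_apply, cons_val', cons_val_zero,
    cons_val_one, empty_val', cons_val_fin_one]
  -- `a q(x) = (a x₀ + b x₁)² + (a d - b²) x₁²`
  rcases hx' with h0 | h1
  · rcases eq_or_ne (x 1) 0 with h1 | h1
    · simp only [h1]; nlinarith [mul_self_pos.mpr h0]
    · nlinarith [sq_nonneg (a * x 0 + b * x 1), mul_self_pos.mpr h1]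
  · nlinarith [sq_nonneg (a * x 0 + b * x 1), mul_self_pos.mpr h1]

theorem small_step_size_eigenvalues_lt_one_general
    (c L μ : ℝ) (hc0 : 0 < c) (hc1 : c < 1) (hμ : 0 < μ) :
    ∃ α₀ > 0, ∀ α : ℝ, 0 < α → α < α₀ →
      ∀ (hQ : (Matrix.of
          ![![1 - 2 * μ * α + L ^ 2 * α ^ 2, 2 * c * L * α],
            ![2 * c * L * α, (1 + 2 * L * α + L ^ 2 * α ^ 2) * c ^ 2]] :
          Matrix (Fin 2) (Fin 2) ℝ).IsHermitian),
        ∀ i, hQ.eigenvalues i < 1 := by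
  have key : ∀ᶠ α in 𝓝 (0 : ℝ), 0 < 2 * μ - L ^ 2 * α ∧
      0 < (2 * μ - L ^ 2 * α) * (1 - (1 + 2 * L * α + L ^ 2 * α ^ 2) * c ^ 2) - 4 * c ^ 2 * L ^ 2 * α := by
    refine ((Continuous.tendsto (by fun_prop) 0).eventually_const_lt ?_).and
      ((Continuous.tendsto (by fun_prop) 0).eventually_const_lt ?_)
    · simpa using hμ
    · simp only [mul_zero, add_zero, sub_zero, one_mul, zero_pow two_ne_zero]
      exact mul_pos (by linarith) (by nlinarith)
  obtain ⟨α₀, hα₀, hsmall⟩ := Metric.eventually_nhds_iff.mp key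
  refine ⟨α₀, hα₀, fun α hα hαα₀ hQ i => hQ.eigenvalues_lt_of_posDef_sub ?_ i⟩
  obtain ⟨hg, hf⟩ := hsmall (by rwa [Real.dist_0_eq_abs, abs_of_pos hα])
  -- `det (1 - Q_α) = α f(α)`, where `f` is the second function in `key`
  refine (congrArg PosDef ?_).mp (posDef_fin_two (mul_pos hα hg) (b := -(2 * c * L * α))
    (d := 1 - (1 + 2 * L * α + L ^ 2 * α ^ 2) * c ^ 2) (by nlinarith [mul_pos hα hf]))
  ext j k
  fin_cases j <;> fin_cases k <;> simp
  ring

/-- for `c ∈ (0,1)`, `0 < μ̃ ≤ L`, there exists `α₀ > 0` such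
that for all `α ∈ (0, α₀)` the largest eigenvalue of the symmetric matrix
`Q_α = [[1 - 2μ̃α + L²α², 2cLα], [2cLα, (1 + 2Lα + L²α²)c²]]` is `< 1`, i.e.
every eigenvalue of `Q_α` is `< 1`. -/
theorem small_step_size_eigenvalues_lt_one
    (c L μ : ℝ) (hc0 : 0 < c) (hc1 : c < 1) (hL : 0 < L) (hμ : 0 < μ)
    (hμL : μ ≤ L) :
    ∃ α₀ > 0, ∀ α : ℝ, 0 < α → α < α₀ →
      ∀ (hQ : (Matrix.of
          ![![1 - 2 * μ * α + L ^ 2 * α ^ 2, 2 * c * L * α],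
            ![2 * c * L * α, (1 + 2 * L * α + L ^ 2 * α ^ 2) * c ^ 2]] :
          Matrix (Fin 2) (Fin 2) ℝ).IsHermitian),
        ∀ i, hQ.eigenvalues i < 1 :=
  small_step_size_eigenvalues_lt_one_general c L μ hc0 hc1 hμ
end
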